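/- With μ a symmetric probability measure on ℝ that is not a Dirac mass, h(s) = ∫ s/(s²+u²) dμ(u), and k(s,t) = (s−t)(1/h(s) − s + t), the function k is real-analytic on (0,∞) × ℝ, and for each fixed t > 0 the map s ↦ k(s,t) is a strictly increasing bijection of (t,∞) onto (0,∞). -/

import Mathlib

/-!
Write `S(x) = ∫ (x + u²)⁻¹ dμ(u)`. Then `h(s) = s S(s²)`, `k(s,0) = 1/S(s²) − s²` and
`k(s,t) = k(s,0) (1 − t/s) + (s − t) t`. As `μ ≠ δ₀`, `S(x) < 1/x`, so `k(s,0) > 0`.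
The functions `u ↦ (x + u²)⁻¹` and `u ↦ (y + u²)⁻¹` are similarly ordered, so Chebyshev's
integral inequality gives `S(x) − S(y) ≥ (y − x) S(x) S(y)`, i.e. `x ↦ 1/S(x) − x` is
nondecreasing. Hence `s ↦ k(s,t)` is strictly increasing on `(t,∞)`, exceeds `(s − t) t`
and vanishes at `s = t`; continuity gives the bijection onto `(0,∞)`. Analyticity of `h`
comes from `h(s) = Im R(is)`, where `R` is the resolvent transform of `μ`, holomorphic off
the real axis.
-/

open MeasureTheory Set

/-- `h μ s = ∫ s/(s² + u²) dμ(u)`. -/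
noncomputable def hfun (μ : MeasureTheory.Measure ℝ) (s : ℝ) : ℝ :=
  ∫ u, s / (s ^ 2 + u ^ 2) ∂μ

/-- `k(s,t) = (s−t)(1/h(s) − s + t)`. -/
noncomputable def kfun (μ : MeasureTheory.Measure ℝ) (s t : ℝ) : ℝ :=
  (s - t) * (1 / hfun μ s - s + t)

open Filter

theorem integral_mul_integral_le_integral_mul_of_monovary {α : Type*} [MeasurableSpace α]
    {μ : Measure α} [IsProbabilityMeasure μ] {f g : α → ℝ} (hfg : Monovary f g)
    (hf : Integrable f μ) (hg : Integrable g μ) (hfg' : Integrable (fun x => f x * g x) μ) :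
    (∫ x, f x ∂μ) * ∫ x, g x ∂μ ≤ ∫ x, f x * g x ∂μ := by
  set F := ∫ x, f x ∂μ
  set G := ∫ x, g x ∂μ
  set E := ∫ x, f x * g x ∂μ
  have inner (x : α) :
      ∫ y, (f x - f y) * (g x - g y) ∂μ = f x * g x - f x * G - g x * F + E := by
    have expand (y : α) : (f x - f y) * (g x - g y) =
        f x * g x - f x * g y - g x * f y + f y * g y := by ring
    simp_rw [expand]
    rw [integral_add (by fun_prop) hfg', integral_sub (by fun_prop) (by fun_prop),
      integral_sub (by fun_prop) (by fun_prop)]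
    simp only [integral_const_mul, integral_const, probReal_univ, smul_eq_mul, one_mul, F, G, E]
  have hsymm : 0 ≤ ∫ x, ∫ y, (f x - f y) * (g x - g y) ∂μ ∂μ :=
    integral_nonneg fun x => integral_nonneg fun y => hfg.sub_mul_sub_nonneg y x
  simp_rw [inner] at hsymm
  rw [integral_add (by fun_prop) (by fun_prop), integral_sub (by fun_prop) (by fun_prop),
    integral_sub hfg' (by fun_prop)] at hsymm
  simp only [integral_mul_const, integral_const, probReal_univ, smul_eq_mul, one_mul] at hsymm
  linarith

lemma measure_compl_singleton_pos {α : Type*} [MeasurableSpace α] [MeasurableSingletonClass α]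
    {μ : Measure α} [IsProbabilityMeasure μ] {a : α} (hμ : μ ≠ Measure.dirac a) :
    0 < μ {a}ᶜ := by
  refine pos_iff_ne_zero.2 fun h => hμ ?_
  have hae : ∀ᵐ x ∂μ, x ∈ ({a} : Finset α) := by
    rw [ae_iff]
    exact measure_mono_null (fun x hx => by simpa using hx) h
  have ha : μ {a} = 1 := (prob_compl_eq_zero_iff (measurableSet_singleton a)).1 h
  simpa [ha] using Measure.ae_mem_finset_iff.1 hae

/-- The Stieltjes transform of the law of `u²` under `μ`, evaluated at `-x`. -/
noncomputable def sqStieltjes (μ : Measure ℝ) (x : ℝ) : ℝ := ∫ u, (x + u ^ 2)⁻¹ ∂μ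

section sqStieltjes

variable {μ : Measure ℝ} {x y : ℝ}

lemma inv_add_sq_le_inv (hx : 0 < x) (u : ℝ) : (x + u ^ 2)⁻¹ ≤ x⁻¹ :=
  inv_anti₀ hx (le_add_of_nonneg_right (sq_nonneg u))

lemma integrable_inv_add_sq [IsFiniteMeasure μ] (hx : 0 < x) :
    Integrable (fun u => (x + u ^ 2)⁻¹) μ :=
  Integrable.of_bound (by fun_prop) x⁻¹ <| ae_of_all _ fun u => by
    rw [Real.norm_of_nonneg (by positivity)]
    exact inv_add_sq_le_inv hx u

lemma sqStieltjes_pos [IsFiniteMeasure μ] [NeZero μ] (hx : 0 < x) : 0 < sqStieltjes μ x := by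
  rw [sqStieltjes, integral_pos_iff_support_of_nonneg (fun u => by positivity)
    (integrable_inv_add_sq hx)]
  have : Function.support (fun u : ℝ => (x + u ^ 2)⁻¹) = univ :=
    Function.support_eq_univ fun u => by positivity
  simpa [this] using NeZero.ne μ

lemma sqStieltjes_lt_inv [IsProbabilityMeasure μ] (hμ : μ ≠ Measure.dirac 0) (hx : 0 < x) :
    sqStieltjes μ x < x⁻¹ := by
  have hsupp : Function.support (fun u : ℝ => x⁻¹ - (x + u ^ 2)⁻¹) = {0}ᶜ := by
    ext u
    simp only [Function.mem_support, sub_ne_zero, mem_compl_iff, mem_singleton_iff]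
    constructor
    · rintro h rfl
      simp at h
    · intro hu
      exact (inv_strictAnti₀ hx (lt_add_of_pos_right x (by positivity))).ne'
  have hpos : 0 < ∫ u, (x⁻¹ - (x + u ^ 2)⁻¹) ∂μ := by
    rw [integral_pos_iff_support_of_nonneg (fun u => sub_nonneg.2 (inv_add_sq_le_inv hx u))
      ((integrable_const _).sub (integrable_inv_add_sq hx)), hsupp]
    exact measure_compl_singleton_pos hμ
  rw [integral_sub (integrable_const _) (integrable_inv_add_sq hx), integral_const,
    probReal_univ, one_smul] at hpos
  exact sub_pos.1 hpos

lemma sqStieltjes_sub_sqStieltjes [IsFiniteMeasure μ] (hx : 0 < x) (hy : 0 < y) :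
    sqStieltjes μ x - sqStieltjes μ y = (y - x) * ∫ u, (x + u ^ 2)⁻¹ * (y + u ^ 2)⁻¹ ∂μ := by
  rw [sqStieltjes, sqStieltjes, ← integral_sub (integrable_inv_add_sq hx)
    (integrable_inv_add_sq hy), ← integral_const_mul]
  refine integral_congr_ae (ae_of_all _ fun u => ?_)
  have : 0 < x + u ^ 2 := by positivity
  have : 0 < y + u ^ 2 := by positivity
  field_simp
  ring

lemma monotoneOn_inv_sqStieltjes_sub [IsProbabilityMeasure μ] :
    MonotoneOn (fun x => (sqStieltjes μ x)⁻¹ - x) (Ioi 0) := by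
  intro x (hx : 0 < x) y (hy : 0 < y) hxy
  have hmono : Monovary (fun u : ℝ => (x + u ^ 2)⁻¹) (fun u => (y + u ^ 2)⁻¹) := by
    intro u v huv
    have : v ^ 2 < u ^ 2 := by
      have := (inv_lt_inv₀ (by positivity) (by positivity)).1 huv
      linarith
    exact inv_anti₀ (by positivity) (by linarith)
  have hcheb : sqStieltjes μ x * sqStieltjes μ y ≤
      ∫ u, (x + u ^ 2)⁻¹ * (y + u ^ 2)⁻¹ ∂μ :=
    integral_mul_integral_le_integral_mul_of_monovary hmono (integrable_inv_add_sq hx)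
      (integrable_inv_add_sq hy) ((integrable_inv_add_sq hy).bdd_mul (by fun_prop)
        (ae_of_all _ fun u => by
          rw [Real.norm_of_nonneg (by positivity)]
          exact inv_add_sq_le_inv hx u))
  have hSx := sqStieltjes_pos (μ := μ) hx
  have hSy := sqStieltjes_pos (μ := μ) hy
  have key : (y - x) * (sqStieltjes μ x * sqStieltjes μ y) ≤
      sqStieltjes μ x - sqStieltjes μ y := by
    rw [sqStieltjes_sub_sqStieltjes hx hy]
    exact mul_le_mul_of_nonneg_left hcheb (sub_nonneg.2 hxy)
  have : y - x ≤ (sqStieltjes μ y)⁻¹ - (sqStieltjes μ x)⁻¹ := by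
    rw [inv_sub_inv hSy.ne' hSx.ne', le_div_iff₀ (by positivity)]
    linarith
  dsimp only
  linarith

end sqStieltjes

section hfun

variable {μ : Measure ℝ} {s : ℝ}

lemma hfun_eq_mul_sqStieltjes (μ : Measure ℝ) (s : ℝ) :
    hfun μ s = s * sqStieltjes μ (s ^ 2) := by
  simp_rw [hfun, sqStieltjes, div_eq_mul_inv, integral_const_mul]

lemma hfun_pos [IsFiniteMeasure μ] [NeZero μ] (hs : 0 < s) : 0 < hfun μ s := by
  rw [hfun_eq_mul_sqStieltjes]
  exact mul_pos hs (sqStieltjes_pos (by positivity))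

open Complex in
lemma hfun_eq_im_resolventTransform [IsFiniteMeasure μ] (hs : s ≠ 0) :
    hfun μ s = (resolventTransform μ (s * I)).im := by
  have hnotin : (s * I : ℂ) ∉ algebraMap ℝ ℂ '' μ.support := by
    rintro ⟨u, -, hu⟩
    exact hs (by simpa using (congrArg Complex.im hu).symm)
  rw [resolventTransform_apply, ← Complex.imCLM_apply,
    ← ContinuousLinearMap.integral_comp_comm _ (integrable_resolvent hnotin)]
  refine integral_congr_ae (ae_of_all _ fun u => ?_)
  simp [resolvent, Complex.inv_im, Complex.normSq_apply]
  ring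

open Complex in
lemma analyticOnNhd_hfun [IsFiniteMeasure μ] : AnalyticOnNhd ℝ (hfun μ) {0}ᶜ := by
  have hR : AnalyticOnNhd ℂ (resolventTransform μ) {z : ℂ | z.im ≠ 0} := by
    refine ((isOpen_ne_fun continuous_im continuous_const).analyticOn_iff_analyticOnNhd).1
      (analyticOn_resolventTransform.mono ?_)
    rintro z (hz : z.im ≠ 0) ⟨u, -, rfl⟩
    simp at hz
  intro s₀ (hs₀ : s₀ ≠ 0)
  have hline : AnalyticAt ℝ (fun x : ℝ => (x : ℂ) * I) s₀ :=
    (ofRealCLM.analyticAt s₀).mul analyticAt_const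
  have hRs : AnalyticAt ℝ (fun x : ℝ => (resolventTransform μ (x * I)).im) s₀ :=
    (imCLM.analyticAt _).comp <|
      AnalyticAt.comp (f := fun x : ℝ => (x : ℂ) * I)
        (hR (s₀ * I) (by simpa using hs₀)).restrictScalars hline
  refine hRs.congr ?_
  filter_upwards [isOpen_ne.mem_nhds hs₀] with x hx
  exact (hfun_eq_im_resolventTransform hx).symm

end hfun

section kfun

variable {μ : Measure ℝ} {s t : ℝ}

lemma kfun_zero (μ : Measure ℝ) (hs : s ≠ 0) :
    kfun μ s 0 = (sqStieltjes μ (s ^ 2))⁻¹ - s ^ 2 := by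
  rw [kfun, hfun_eq_mul_sqStieltjes, one_div, mul_inv, sub_zero, add_zero, mul_sub,
    ← mul_assoc, mul_inv_cancel₀ hs, one_mul, sq]

lemma kfun_eq_kfun_zero_mul_add (μ : Measure ℝ) (hs : s ≠ 0) (t : ℝ) :
    kfun μ s t = kfun μ s 0 * (1 - t / s) + (s - t) * t := by
  simp only [kfun]
  field_simp
  ring

variable [IsProbabilityMeasure μ]

lemma kfun_zero_pos (hμ : μ ≠ Measure.dirac 0) (hs : 0 < s) : 0 < kfun μ s 0 := by
  rw [kfun_zero μ hs.ne', sub_pos, lt_inv_comm₀ (pow_pos hs 2) (sqStieltjes_pos (pow_pos hs 2))]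
  exact sqStieltjes_lt_inv hμ (pow_pos hs 2)

lemma monotoneOn_kfun_zero : MonotoneOn (fun s => kfun μ s 0) (Ioi 0) := by
  intro s₁ (hs₁ : 0 < s₁) s₂ (hs₂ : 0 < s₂) h
  simp only [kfun_zero μ hs₁.ne', kfun_zero μ hs₂.ne']
  exact monotoneOn_inv_sqStieltjes_sub (pow_pos hs₁ 2) (pow_pos hs₂ 2)
    (pow_le_pow_left₀ hs₁.le h 2)

lemma mul_lt_kfun (hμ : μ ≠ Measure.dirac 0) (ht : 0 < t) (hts : t < s) :
    (s - t) * t < kfun μ s t := by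
  have hs : 0 < s := ht.trans hts
  rw [kfun_eq_kfun_zero_mul_add μ hs.ne']
  have : 0 < 1 - t / s := by rwa [sub_pos, div_lt_one hs]
  linarith [mul_pos (kfun_zero_pos hμ hs) this]

lemma strictMonoOn_kfun (hμ : μ ≠ Measure.dirac 0) (ht : 0 < t) :
    StrictMonoOn (fun s => kfun μ s t) (Ioi t) := by
  intro s₁ (hs₁ : t < s₁) s₂ (hs₂ : t < s₂) h
  have h₁ : 0 < s₁ := ht.trans hs₁
  have h₂ : 0 < s₂ := ht.trans hs₂
  show kfun μ s₁ t < kfun μ s₂ t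
  rw [kfun_eq_kfun_zero_mul_add μ h₁.ne' t, kfun_eq_kfun_zero_mul_add μ h₂.ne' t]
  have hk₁ := kfun_zero_pos hμ h₁
  have hk : kfun μ s₁ 0 ≤ kfun μ s₂ 0 := monotoneOn_kfun_zero h₁ h₂ h.le
  have hfrac₁ : 0 < 1 - t / s₁ := by rwa [sub_pos, div_lt_one h₁]
  have hfrac : 1 - t / s₁ < 1 - t / s₂ := by
    linarith [div_lt_div_of_pos_left ht h₁ h]
  calc kfun μ s₁ 0 * (1 - t / s₁) + (s₁ - t) * t
      < kfun μ s₁ 0 * (1 - t / s₂) + (s₂ - t) * t := by gcongr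
    _ ≤ kfun μ s₂ 0 * (1 - t / s₂) + (s₂ - t) * t := by gcongr; linarith

lemma tendsto_kfun_atTop (hμ : μ ≠ Measure.dirac 0) (ht : 0 < t) :
    Tendsto (fun s => kfun μ s t) atTop atTop := by
  refine tendsto_atTop_mono' _ ?_
    ((tendsto_atTop_add_const_right _ (-t) tendsto_id).atTop_mul_const ht)
  filter_upwards [eventually_gt_atTop t] with s hs
  rw [id, ← sub_eq_add_neg]
  exact (mul_lt_kfun hμ ht hs).le

lemma analyticOnNhd_kfun :
    AnalyticOnNhd ℝ (fun p : ℝ × ℝ => kfun μ p.1 p.2) (Ioi 0 ×ˢ univ) := by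
  rintro ⟨s, t⟩ ⟨hs : 0 < s, -⟩
  have hh : AnalyticAt ℝ (fun p : ℝ × ℝ => hfun μ p.1) (s, t) :=
    AnalyticAt.comp (g := hfun μ) (analyticOnNhd_hfun s hs.ne') analyticAt_fst
  have hinv : AnalyticAt ℝ (fun p : ℝ × ℝ => 1 / hfun μ p.1) (s, t) :=
    analyticAt_const.div hh (hfun_pos hs).ne'
  exact (analyticAt_fst.sub analyticAt_snd).mul ((hinv.sub analyticAt_fst).add analyticAt_snd)

lemma bijOn_kfun (hμ : μ ≠ Measure.dirac 0) (ht : 0 < t) :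
    BijOn (fun s => kfun μ s t) (Ioi t) (Ioi 0) := by
  refine ⟨fun s (hs : t < s) => ?_, (strictMonoOn_kfun hμ ht).injOn, fun y (hy : 0 < y) => ?_⟩
  · exact (mul_pos (sub_pos.2 hs) ht).trans (mul_lt_kfun hμ ht hs)
  obtain ⟨b, hyb, htb⟩ :=
    ((tendsto_kfun_atTop hμ ht).eventually_gt_atTop y |>.and (eventually_gt_atTop t)).exists
  have hcont : ContinuousOn (fun s => kfun μ s t) (Icc t b) :=
    analyticOnNhd_kfun.continuousOn.comp (Continuous.prodMk_left t).continuousOn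
      fun s hs => ⟨ht.trans_le hs.1, mem_univ _⟩
  have hkt : kfun μ t t = 0 := by simp [kfun]
  obtain ⟨s, hs, rfl⟩ := intermediate_value_Ioo htb.le hcont ⟨hkt ▸ hy, hyb⟩
  exact ⟨s, hs.1, rfl⟩

end kfun

theorem stmt2_general (μ : MeasureTheory.Measure ℝ) [IsProbabilityMeasure μ]
    (hnd : ∀ c : ℝ, μ ≠ MeasureTheory.Measure.dirac c) :
    AnalyticOn ℝ (fun p : ℝ × ℝ => kfun μ p.1 p.2) (Ioi (0 : ℝ) ×ˢ (univ : Set ℝ)) ∧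
      ∀ t : ℝ, 0 < t →
        StrictMonoOn (fun s => kfun μ s t) (Ioi t) ∧
          BijOn (fun s => kfun μ s t) (Ioi t) (Ioi (0 : ℝ)) :=
  ⟨analyticOnNhd_kfun.analyticOn,
    fun _ ht => ⟨strictMonoOn_kfun (hnd 0) ht, bijOn_kfun (hnd 0) ht⟩⟩

/-- For a symmetric non-Dirac probability measure `μ` on `ℝ`, the function `k` is
real-analytic on `(0,∞) × ℝ`, and for each `t > 0` the map `s ↦ k(s,t)` is a strictly
increasing bijection of `(t,∞)` onto `(0,∞)`. -/
theorem stmt2 (μ : MeasureTheory.Measure ℝ) [IsProbabilityMeasure μ]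
    (hsym : μ.map (fun u => -u) = μ)
    (hnd : ∀ c : ℝ, μ ≠ MeasureTheory.Measure.dirac c) :
    AnalyticOn ℝ (fun p : ℝ × ℝ => kfun μ p.1 p.2) (Ioi (0 : ℝ) ×ˢ (univ : Set ℝ)) ∧
      ∀ t : ℝ, 0 < t →
        StrictMonoOn (fun s => kfun μ s t) (Ioi t) ∧
          BijOn (fun s => kfun μ s t) (Ioi t) (Ioi (0 : ℝ)) :=
  stmt2_general μ hnd
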